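/- arXiv:0809.2501 — 6 statements merged into one kernel-verified Lean document; each statement's English description precedes it below -/
import Mathlib

section
/- For 0 < q < 1 and a natural number r ≥ 1, ∑_{k=1}^∞ k q^k/(1-q^k) − ∑_{k=1}^∞ k q^{rk}/(1-q^k) = ∑_{i=1}^{r-1} q^i/(1-q^i)². -/
/-!
Term by term, `(q ^ k - q ^ (r * k)) / (1 - q ^ k)` is the finite geometric sum
`∑_{i=1}^{r-1} (q ^ i) ^ k`, so the difference of the two series is
`∑_{i=1}^{r-1} ∑_k k (q ^ i) ^ k = ∑_{i=1}^{r-1} q ^ i / (1 - q ^ i) ^ 2`.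
Both series converge absolutely since their terms are `O(k ‖q‖ ^ k)`, so they may be subtracted
term by term.
-/

open Finset

theorem div_one_sub_sub_div_one_sub_eq_sum_Ico {𝕜 : Type*} [Field 𝕜] {x : 𝕜} (hx : x ≠ 1)
    {r : ℕ} (hr : 1 ≤ r) (c : 𝕜) :
    c * x / (1 - x) - c * x ^ r / (1 - x) = ∑ i ∈ Ico 1 r, c * x ^ i := by
  rw [← mul_sum, geom_sum_Ico' hx hr, pow_one, mul_div_assoc, mul_div_assoc, ← mul_sub, sub_div]

section NormedField

variable {𝕜 : Type*} [NormedField 𝕜] {q : 𝕜}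

theorem one_sub_norm_le_norm_one_sub_pow (hq : ‖q‖ ≤ 1) {n : ℕ} (hn : n ≠ 0) :
    1 - ‖q‖ ≤ ‖1 - q ^ n‖ :=
  calc 1 - ‖q‖ ≤ 1 - ‖q‖ ^ n := by gcongr; exact pow_le_of_le_one (norm_nonneg q) hq hn
    _ = ‖(1 : 𝕜)‖ - ‖q ^ n‖ := by rw [norm_one, norm_pow]
    _ ≤ ‖1 - q ^ n‖ := norm_sub_norm_le _ _

theorem hasSum_coe_add_one_mul_pow_succ (hq : ‖q‖ < 1) :
    HasSum (fun k : ℕ => ((k : 𝕜) + 1) * q ^ (k + 1)) (q / (1 - q) ^ 2) := by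
  have h : HasSum (fun k : ℕ => ((k + 1 : ℕ) : 𝕜) * q ^ (k + 1))
      (q / (1 - q) ^ 2 - ∑ i ∈ range 1, (i : 𝕜) * q ^ i) :=
    (hasSum_nat_add_iff' 1).mpr (hasSum_coe_mul_geometric_of_norm_lt_one hq)
  simpa using h

theorem summable_coe_add_one_mul_pow_mul_div_one_sub_pow [CompleteSpace 𝕜] (hq : ‖q‖ < 1)
    {r : ℕ} (hr : 1 ≤ r) :
    Summable fun k : ℕ => ((k : 𝕜) + 1) * q ^ (r * (k + 1)) / (1 - q ^ (k + 1)) := by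
  have hbound : Summable fun k : ℕ => ‖((k + 1 : ℕ) : 𝕜) ^ 1 * q ^ (k + 1)‖ / (1 - ‖q‖) :=
    ((summable_nat_add_iff 1).mpr (summable_norm_pow_mul_geometric_of_norm_lt_one 1 hq)).div_const _
  refine hbound.of_norm_bounded fun k => ?_
  push_cast
  simp only [norm_div, norm_mul, norm_pow, pow_one]
  gcongr _ * ?_ / ?_
  · exact pow_le_pow_of_le_one (norm_nonneg q) hq.le (Nat.le_mul_of_pos_left _ hr)
  · exact one_sub_norm_le_norm_one_sub_pow hq.le k.succ_ne_zero

theorem hasSum_coe_add_one_mul_pow_div_one_sub_pow_sub (hq : ‖q‖ < 1) {r : ℕ} (hr : 1 ≤ r) :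
    HasSum (fun k : ℕ => ((k : 𝕜) + 1) * q ^ (k + 1) / (1 - q ^ (k + 1)) -
        ((k : 𝕜) + 1) * q ^ (r * (k + 1)) / (1 - q ^ (k + 1)))
      (∑ i ∈ Ico 1 r, q ^ i / (1 - q ^ i) ^ 2) := by
  have hsum : HasSum (fun k : ℕ => ∑ i ∈ Ico 1 r, ((k : 𝕜) + 1) * (q ^ i) ^ (k + 1))
      (∑ i ∈ Ico 1 r, q ^ i / (1 - q ^ i) ^ 2) := by
    refine hasSum_sum fun i hi => hasSum_coe_add_one_mul_pow_succ ?_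
    rw [norm_pow]
    exact pow_lt_one₀ (norm_nonneg q) hq (Nat.one_le_iff_ne_zero.mp (mem_Ico.mp hi).1)
  refine hsum.congr_fun fun k => ?_
  have hx : q ^ (k + 1) ≠ 1 := by
    refine ne_of_apply_ne norm fun h => ?_
    rw [norm_one, norm_pow] at h
    exact (pow_lt_one₀ (norm_nonneg q) hq k.succ_ne_zero).ne h
  rw [mul_comm r, pow_mul, div_one_sub_sub_div_one_sub_eq_sum_Ico hx hr]
  exact sum_congr rfl fun i _ => by rw [← pow_mul, ← pow_mul, mul_comm i]

end NormedField

theorem zetaq_shift (q : ℝ) (hq : 0 < q) (hq1 : q < 1) (r : ℕ) (hr : 1 ≤ r) :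
    (∑' k : ℕ, (k + 1 : ℝ) * q ^ (k + 1) / (1 - q ^ (k + 1))) -
      (∑' k : ℕ, (k + 1 : ℝ) * q ^ (r * (k + 1)) / (1 - q ^ (k + 1))) =
      ∑ i ∈ Finset.Icc 1 (r - 1), q ^ i / (1 - q ^ i) ^ 2 := by
  have hq' : ‖q‖ < 1 := by rwa [Real.norm_eq_abs, abs_of_pos hq]
  have hsum₁ := summable_coe_add_one_mul_pow_mul_div_one_sub_pow hq' le_rfl
  simp only [one_mul] at hsum₁
  have hIcc : Icc 1 (r - 1) = Ico 1 r := by ext; simp; omega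
  rw [← hsum₁.tsum_sub (summable_coe_add_one_mul_pow_mul_div_one_sub_pow hq' hr), hIcc]
  exact (hasSum_coe_add_one_mul_pow_div_one_sub_pow_sub hq' hr).tsum_eq
end

section
/- For 0 < q < 1, the little q-Legendre polynomial P_n(x;1,1|q) = ∑_{k=0}^n (q^{-n};q)_k (q^{n+1};q)_k / ((q;q)_k)² · q^k x^k satisfies the orthogonality relations ∑_{k=0}^∞ q^k P_n(q^k;1,1|q) q^{km} = 0 for all m = 0, 1, ..., n−1. -/
/-- The q-Pochhammer symbol `(a;q)_n = ∏_{j=0}^{n-1} (1 - a q^j)`. -/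
noncomputable def qPoch (a q : ℝ) (n : ℕ) : ℝ := ∏ j ∈ Finset.range n, (1 - a * q ^ j)

/-- The little q-Legendre polynomial `P_n(x;1,1|q)`. -/
noncomputable def littleQLegendre (q : ℝ) (n : ℕ) (x : ℝ) : ℝ :=
  ∑ k ∈ Finset.range (n + 1),
    qPoch (q ^ (-(n : ℤ))) q k * qPoch (q ^ (n + 1)) q k / (qPoch q q k) ^ 2 * q ^ k * x ^ k

/-!
Write `P_n(x) = ∑_j c_j x^j` and `F(u) = ∑_j c_j / (1 - u q^j)`. Summing geometric series,
`∑_k u^k P_n(q^k) = F(u)` for `|u| < 1`, so the `m`-th moment is `F(q^(m+1))`.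

The ratio `c_{j+1} / c_j` makes `F` satisfy the contiguous relation
`q^n (1 - u)^2 F(u) = (q^n - u) (1 - u q^(n+1)) F(u q)`: termwise, the difference of the two
sides is `G(j+1) - G(j)` for an explicit rational certificate `G` with `G(0) = 0`, and
`G(n+1) = 0` because `c_{n+1} = 0`. At `u = q^n` the right side vanishes, so `F(q^n) = 0`,
and descending through the relation gives `F(q^s) = 0` for `1 ≤ s ≤ n`.
-/

open Finset

theorem qPoch_succ (a q : ℝ) (j : ℕ) : qPoch a q (j + 1) = qPoch a q j * (1 - a * q ^ j) :=
  prod_range_succ _ _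

theorem one_sub_pow_ne_zero {q : ℝ} (hq : 0 ≤ q) (hq1 : q < 1) {k : ℕ} (hk : k ≠ 0) :
    1 - q ^ k ≠ 0 :=
  sub_ne_zero.2 (pow_lt_one₀ hq hq1 hk).ne'

theorem qPoch_self_ne_zero {q : ℝ} (hq : 0 ≤ q) (hq1 : q < 1) (j : ℕ) : qPoch q q j ≠ 0 :=
  prod_ne_zero_iff.2 fun i _ => by
    rw [← pow_succ']
    exact one_sub_pow_ne_zero hq hq1 i.succ_ne_zero

noncomputable def littleQLegendreCoeff (q : ℝ) (n j : ℕ) : ℝ :=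
  qPoch (q ^ (-(n : ℤ))) q j * qPoch (q ^ (n + 1)) q j / qPoch q q j ^ 2 * q ^ j

theorem littleQLegendre_eq_sum (q : ℝ) (n : ℕ) (x : ℝ) :
    littleQLegendre q n x = ∑ j ∈ range (n + 1), littleQLegendreCoeff q n j * x ^ j :=
  rfl

theorem littleQLegendreCoeff_succ_self {q : ℝ} (hq : q ≠ 0) (n : ℕ) :
    littleQLegendreCoeff q n (n + 1) = 0 := by
  have : qPoch (q ^ (-(n : ℤ))) q (n + 1) = 0 :=
    prod_eq_zero (self_mem_range_succ n) (by simp [zpow_neg, hq])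
  rw [littleQLegendreCoeff, this, zero_mul, zero_div, zero_mul]

theorem littleQLegendreCoeff_succ {q : ℝ} (hq : 0 < q) (hq1 : q < 1) (n j : ℕ) :
    littleQLegendreCoeff q n (j + 1) * q ^ n * (1 - q ^ (j + 1)) ^ 2
      = littleQLegendreCoeff q n j * q * (q ^ n - q ^ j) * (1 - q ^ (n + 1) * q ^ j) := by
  have hR := qPoch_self_ne_zero hq.le hq1 j
  have hj : 1 - q ^ j * q ≠ 0 := by
    rw [← pow_succ]; exact one_sub_pow_ne_zero hq.le hq1 j.succ_ne_zero
  have hqn : q ^ n ≠ 0 := by positivity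
  simp only [littleQLegendreCoeff, qPoch_succ, zpow_neg, zpow_natCast]
  field_simp
  ring

noncomputable def littleQLegendreGF (q : ℝ) (n : ℕ) (u : ℝ) : ℝ :=
  ∑ j ∈ range (n + 1), littleQLegendreCoeff q n j / (1 - u * q ^ j)

theorem hasSum_littleQLegendreGF {q u : ℝ} (hq : |q| ≤ 1) (hu : |u| < 1) (n : ℕ) :
    HasSum (fun k => u ^ k * littleQLegendre q n (q ^ k)) (littleQLegendreGF q n u) := by
  simp only [littleQLegendre_eq_sum, mul_sum]
  refine hasSum_sum fun j _ => ?_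
  have hr : |u * q ^ j| < 1 := by
    rw [abs_mul, abs_pow]
    exact mul_lt_one_of_nonneg_of_lt_one_left (abs_nonneg u) hu (pow_le_one₀ (abs_nonneg q) hq)
  rw [div_eq_mul_inv]
  exact ((hasSum_geometric_of_abs_lt_one hr).mul_left _).congr_fun fun k => by ring

theorem littleQLegendreGF_contiguous {q : ℝ} (hq : 0 < q) (hq1 : q < 1) (n : ℕ) {u : ℝ}
    (hu : ∀ j, 1 - u * q ^ j ≠ 0) :
    q ^ n * (1 - u) ^ 2 * littleQLegendreGF q n u
      = (q ^ n - u) * (1 - u * q ^ (n + 1)) * littleQLegendreGF q n (u * q) := by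
  set A := littleQLegendreCoeff q n
  set G : ℕ → ℝ := fun j => q ^ n * u * (1 - q ^ j) ^ 2 * A j / (q ^ j * (1 - u * q ^ j))
  have hterm : ∀ j, (q ^ n - u) * (1 - u * q ^ (n + 1)) * (A j / (1 - u * q * q ^ j))
      - q ^ n * (1 - u) ^ 2 * (A j / (1 - u * q ^ j)) = G (j + 1) - G j := by
    intro j
    have hj : 1 - q * q ^ j ≠ 0 := by
      rw [← pow_succ']; exact one_sub_pow_ne_zero hq.le hq1 j.succ_ne_zero
    have hqn : q ^ n ≠ 0 := by positivity
    have huj := hu j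
    have huj' : 1 - u * q * q ^ j ≠ 0 := by rw [mul_assoc, ← pow_succ']; exact hu (j + 1)
    have hA : A (j + 1) = A j * q * (q ^ n - q ^ j) * (1 - q ^ (n + 1) * q ^ j)
        / (q ^ n * (1 - q ^ (j + 1)) ^ 2) := by
      rw [eq_div_iff (mul_ne_zero hqn (pow_ne_zero 2 (by rwa [pow_succ']))), ← mul_assoc]
      exact littleQLegendreCoeff_succ hq hq1 n j
    simp only [G, hA, pow_succ]
    field_simp
    ring
  have hG0 : G 0 = 0 := by simp [G]
  have hGtop : G (n + 1) = 0 := by simp [G, A, littleQLegendreCoeff_succ_self hq.ne']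
  rw [eq_comm, ← sub_eq_zero, littleQLegendreGF, littleQLegendreGF, mul_sum, mul_sum,
    ← sum_sub_distrib, sum_congr rfl fun j _ => hterm j, sum_range_sub, hG0, hGtop, sub_zero]

theorem littleQLegendreGF_pow_eq_zero {q : ℝ} (hq : 0 < q) (hq1 : q < 1) {n s : ℕ} (hs : s ≠ 0)
    (hsn : s ≤ n) : littleQLegendreGF q n (q ^ s) = 0 := by
  have step : ∀ k ≠ 0, (q ^ n - q ^ k) * littleQLegendreGF q n (q ^ (k + 1)) = 0 →
      littleQLegendreGF q n (q ^ k) = 0 := by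
    intro k hk h
    have hrel := littleQLegendreGF_contiguous hq hq1 n (u := q ^ k) fun j => by
      rw [← pow_add]; exact one_sub_pow_ne_zero hq.le hq1 (by omega)
    rw [← pow_succ, mul_right_comm (q ^ n - q ^ k), h, zero_mul] at hrel
    exact (mul_eq_zero.1 hrel).resolve_left
      (mul_ne_zero (by positivity) (pow_ne_zero 2 (one_sub_pow_ne_zero hq.le hq1 hk)))
  induction hsn using Nat.decreasingInduction with
  | self => exact step n hs (by rw [sub_self, zero_mul])
  | of_succ k _ ih => exact step k hs (by rw [ih k.succ_ne_zero, mul_zero])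

theorem littleQLegendre_orthogonality (q : ℝ) (hq : 0 < q) (hq1 : q < 1) (n m : ℕ)
    (hm : m < n) :
    ∑' k : ℕ, q ^ k * littleQLegendre q n (q ^ k) * (q ^ k : ℝ) ^ m = 0 := by
  have hsum := hasSum_littleQLegendreGF (abs_le.2 ⟨by linarith, hq1.le⟩)
    (abs_lt.2 ⟨neg_one_lt_zero.trans (by positivity), pow_lt_one₀ hq.le hq1 m.add_one_ne_zero⟩) n
  rw [littleQLegendreGF_pow_eq_zero hq hq1 m.add_one_ne_zero hm] at hsum
  refine (hsum.congr_fun fun k => ?_).tsum_eq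
  ring
end

section
/- For an integer p ≥ 2, let d_n(p) = ∏_{d=1}^n Φ_d(p) where Φ_d is the d-th cyclotomic polynomial. Then lim_{n→∞} d_n(p)^{1/n²} = p^{3/π²}. -/
/-!
Möbius inversion of `∏_{d ∣ m} Φ_d(x) = x ^ m - 1` gives
`∑_{d ≤ n} log Φ_d(x) = ∑_{k ≤ n} μ(k) G(⌊n / k⌋)` with `G(m) = ∑_{e ≤ m} log (x ^ e - 1)`.
As `log (x ^ e - 1) = e log x + O(1)`, `G(m) = m² log x / 2 + O(m)`, and dominated convergence
gives `∑_{d ≤ n} log Φ_d(x) / n² → (log x / 2) ∑ μ(k) / k² = (log x / 2) / ζ(2) = 3 log x / π²`.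
-/

open Filter Topology Real

open Finset Polynomial
open scoped ArithmeticFunction.Moebius ArithmeticFunction.zeta

section Moebius

open ArithmeticFunction

theorem ArithmeticFunction.sum_Ioc_eq_sum_moebius_mul_sum_Ioc_mul_zeta {R : Type*} [CommRing R]
    (f : ArithmeticFunction R) (N : ℕ) :
    ∑ n ∈ Ioc 0 N, f n = ∑ k ∈ Ioc 0 N, (μ k : R) * ∑ m ∈ Ioc 0 (N / k), (f * ζ) m := by
  have hf : (μ : ArithmeticFunction R) * (f * ζ) = f := by
    rw [mul_comm, mul_assoc, coe_zeta_mul_coe_moebius, mul_one]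
  conv_lhs => rw [← hf]
  rw [sum_Ioc_mul_eq_sum_sum]
  simp only [intCoe_apply]

theorem hasSum_moebius_div_sq : HasSum (fun k : ℕ => (μ k : ℝ) / k ^ 2) (6 / π ^ 2) := by
  have hsum : Summable (fun k : ℕ => (μ k : ℝ) / k ^ 2) := by
    refine (Real.summable_one_div_nat_pow.2 one_lt_two).of_norm_bounded (fun k => ?_)
    rw [norm_div, norm_pow, Real.norm_natCast, Real.norm_eq_abs]
    gcongr
    exact_mod_cast abs_moebius_le_one
  have hL : LSeries (fun k => (μ k : ℂ)) 2 = ((∑' k : ℕ, (μ k : ℝ) / k ^ 2 : ℝ) : ℂ) := by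
    rw [Complex.ofReal_tsum]
    refine tsum_congr fun k => ?_
    rcases eq_or_ne k 0 with rfl | hk
    · simp
    · simp [LSeries.term_of_ne_zero hk]
  have hs : (1 : ℝ) < (2 : ℂ).re := by norm_num
  have h := LSeries_zeta_mul_Lseries_moebius hs
  rw [LSeries_zeta_eq_riemannZeta hs, riemannZeta_two, hL] at h
  refine hsum.hasSum_iff.2 (Complex.ofReal_injective ?_)
  generalize ∑' k : ℕ, (μ k : ℝ) / k ^ 2 = S at h ⊢
  have hπ : (π : ℂ) ≠ 0 := by exact_mod_cast pi_ne_zero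
  push_cast
  field_simp
  linear_combination 6 * h

theorem tendsto_nat_div_div_self {k : ℕ} (hk : k ≠ 0) :
    Tendsto (fun n : ℕ => ((n / k : ℕ) : ℝ) / n) atTop (𝓝 (1 / k)) := by
  have hk' : (0 : ℝ) < k := by positivity
  have h := ((tendsto_nat_floor_div_atTop (R := ℝ)).comp
    ((tendsto_natCast_atTop_atTop (R := ℝ)).atTop_div_const hk')).div_const (k : ℝ)
  refine h.congr' ?_
  filter_upwards [eventually_ne_atTop 0] with n hn
  simp only [Function.comp_apply, Nat.floor_div_natCast, Nat.floor_natCast]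
  field_simp

theorem tendsto_sum_moebius_mul_div_sq {G : ℕ → ℝ} {L C : ℝ}
    (hG : Tendsto (fun m : ℕ => G m / m ^ 2) atTop (𝓝 L)) (hC : ∀ m : ℕ, |G m| ≤ C * m ^ 2) :
    Tendsto (fun n : ℕ => (∑ k ∈ Ioc 0 n, (μ k : ℝ) * G (n / k)) / n ^ 2) atTop
      (𝓝 (6 / π ^ 2 * L)) := by
  set F : ℕ → ℕ → ℝ := fun n k => μ k * G (n / k) / n ^ 2
  have hG0 : G 0 = 0 := abs_nonpos_iff.1 (by simpa using hC 0)
  have hC0 : 0 ≤ C := by simpa using (abs_nonneg _).trans (hC 1)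
  have hF_sum : ∀ n, (∑ k ∈ Ioc 0 n, (μ k : ℝ) * G (n / k)) / n ^ 2 = ∑' k, F n k := by
    intro n
    rw [Finset.sum_div, tsum_eq_sum]
    intro k hk
    rcases Nat.eq_zero_or_pos k with rfl | hk0
    · simp [F]
    · simp [F, Nat.div_eq_of_lt (by simpa [hk0] using hk), hG0]
  have hF_lim : ∀ k, Tendsto (F · k) atTop (𝓝 (μ k / k ^ 2 * L)) := by
    intro k
    rcases eq_or_ne k 0 with rfl | hk
    · simp [F]
    have h := ((hG.comp (Nat.tendsto_div_const_atTop hk)).mul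
      ((tendsto_nat_div_div_self hk).pow 2)).const_mul (μ k : ℝ)
    convert h.congr' ?_ using 2
    · ring
    filter_upwards [eventually_ge_atTop k] with n hn
    have hnk : ((n / k : ℕ) : ℝ) ≠ 0 := by
      exact_mod_cast (Nat.div_pos hn (Nat.pos_of_ne_zero hk)).ne'
    have hn0 : (n : ℝ) ≠ 0 := by exact_mod_cast (Nat.pos_of_ne_zero hk).trans_le hn |>.ne'
    simp only [F, Function.comp_apply]
    field_simp
  have hF_bound : ∀ n k, ‖F n k‖ ≤ C / k ^ 2 := by
    intro n k
    rcases eq_or_ne n 0 with rfl | hn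
    · simpa [F] using div_nonneg hC0 (sq_nonneg (k : ℝ))
    have hμ : |(μ k : ℝ)| ≤ 1 := by exact_mod_cast abs_moebius_le_one
    have hdiv : ((n / k : ℕ) : ℝ) ≤ n / k := Nat.cast_div_le
    calc ‖F n k‖ = |(μ k : ℝ)| * |G (n / k)| / n ^ 2 := by simp [F]
      _ ≤ 1 * (C * (n / k) ^ 2) / n ^ 2 := by
        gcongr
        exact (hC _).trans (by gcongr)
      _ = C / k ^ 2 := by field_simp
  have hlim := tendsto_tsum_of_dominated_convergence
    ((Real.summable_one_div_nat_pow.2 one_lt_two).mul_left C) hF_lim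
    (Eventually.of_forall fun n k => (hF_bound n k).trans_eq (mul_one_div C _).symm)
  rw [(hasSum_moebius_div_sq.mul_right L).tsum_eq] at hlim
  simpa only [hF_sum] using hlim

end Moebius

theorem sum_Ioc_natCast_id (m : ℕ) : ∑ e ∈ Ioc 0 m, (e : ℝ) = m * (m + 1) / 2 := by
  induction m with
  | zero => simp
  | succ m ih =>
    rw [sum_Ioc_succ_top (Nat.zero_le m), ih]
    push_cast
    ring

section LinearPlusBoundedTerms

variable {a : ℕ → ℝ} {ℓ K : ℝ}

theorem abs_sum_Ioc_sub_le (h : ∀ e, 0 < e → |a e - ℓ * e| ≤ K) (m : ℕ) :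
    |∑ e ∈ Ioc 0 m, a e - ℓ * (m * (m + 1) / 2)| ≤ K * m := by
  rw [← sum_Ioc_natCast_id, mul_sum, ← sum_sub_distrib]
  calc |∑ e ∈ Ioc 0 m, (a e - ℓ * e)| ≤ ∑ e ∈ Ioc 0 m, |a e - ℓ * e| := abs_sum_le_sum_abs _ _
    _ ≤ ∑ _e ∈ Ioc 0 m, K := sum_le_sum fun e he => h e (mem_Ioc.1 he).1
    _ = K * m := by simp [mul_comm]

theorem abs_sum_Ioc_le (h : ∀ e, 0 < e → |a e - ℓ * e| ≤ K) (m : ℕ) :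
    |∑ e ∈ Ioc 0 m, a e| ≤ (|ℓ| + K) * m ^ 2 := by
  have hK : 0 ≤ K := (abs_nonneg _).trans (h 1 one_pos)
  have hm : (m : ℝ) ≤ m ^ 2 := by exact_mod_cast Nat.le_self_pow two_ne_zero m
  set S := ∑ e ∈ Ioc 0 m, a e
  set T : ℝ := m * (m + 1) / 2 with hT_def
  have hT : |ℓ * T| ≤ |ℓ| * m ^ 2 := by
    rw [abs_mul, abs_of_nonneg (a := T) (by positivity)]
    exact mul_le_mul_of_nonneg_left (by rw [hT_def]; linarith) (abs_nonneg ℓ)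
  calc |S| ≤ |S - ℓ * T| + |ℓ * T| := by
        simpa only [sub_add_cancel] using abs_add_le (S - ℓ * T) (ℓ * T)
    _ ≤ K * m ^ 2 + |ℓ| * m ^ 2 :=
        add_le_add ((abs_sum_Ioc_sub_le h m).trans (mul_le_mul_of_nonneg_left hm hK)) hT
    _ = (|ℓ| + K) * m ^ 2 := by ring

theorem tendsto_sum_Ioc_div_sq (h : ∀ e, 0 < e → |a e - ℓ * e| ≤ K) :
    Tendsto (fun m : ℕ => (∑ e ∈ Ioc 0 m, a e) / m ^ 2) atTop (𝓝 (ℓ / 2)) := by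
  have hmain : Tendsto (fun m : ℕ => ℓ / 2 * (1 + 1 / (m : ℝ))) atTop (𝓝 (ℓ / 2)) := by
    simpa using ((tendsto_const_nhds (x := (1 : ℝ))).add
      tendsto_one_div_atTop_nhds_zero_nat).const_mul (ℓ / 2)
  have herr : Tendsto (fun m : ℕ => (∑ e ∈ Ioc 0 m, a e - ℓ * (m * (m + 1) / 2)) / m ^ 2)
      atTop (𝓝 0) := by
    refine squeeze_zero_norm' ?_ (tendsto_const_div_atTop_nhds_zero_nat K)
    filter_upwards [eventually_gt_atTop 0] with m hm
    have hm' : (0 : ℝ) < m := by exact_mod_cast hm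
    rw [norm_div, Real.norm_eq_abs, norm_pow, Real.norm_natCast, div_le_iff₀ (by positivity)]
    calc _ ≤ K * m := abs_sum_Ioc_sub_le h m
      _ = K / m * m ^ 2 := by field_simp
  simpa using (hmain.add herr).congr' (by
    filter_upwards [eventually_gt_atTop 0] with m hm
    have hm' : (m : ℝ) ≠ 0 := by exact_mod_cast hm.ne'
    field_simp
    ring)

end LinearPlusBoundedTerms

theorem sum_divisors_log_cyclotomic_eval {x : ℝ} (hx : 1 < x) {m : ℕ} (hm : 0 < m) :
    ∑ d ∈ m.divisors, log ((cyclotomic d ℝ).eval x) = log (x ^ m - 1) := by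
  rw [← log_prod fun d _ => (cyclotomic_pos' d hx).ne', ← eval_prod,
    prod_cyclotomic_eq_X_pow_sub_one hm]
  simp

theorem abs_log_pow_sub_one_sub_le {x : ℝ} (hx : 1 < x) {e : ℕ} (he : 0 < e) :
    |log (x ^ e - 1) - log x * e| ≤ log (x / (x - 1)) := by
  obtain ⟨k, rfl⟩ : ∃ k, e = k + 1 := ⟨e - 1, by omega⟩
  have hx1 : 0 < x - 1 := sub_pos.2 hx
  have hxk : 1 ≤ x ^ k := one_le_pow₀ hx.le
  have hpos : 0 < x ^ (k + 1) - 1 := by rw [pow_succ]; nlinarith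
  have hupper : log (x ^ (k + 1) - 1) ≤ log x * (k + 1 : ℕ) := by
    rw [mul_comm, ← log_pow]
    exact log_le_log hpos (by linarith)
  have hlower : log (x ^ k * (x - 1)) ≤ log (x ^ (k + 1) - 1) :=
    log_le_log (by positivity) (by rw [pow_succ]; nlinarith)
  have hlog : log (x - 1) ≤ log x := log_le_log hx1 (by linarith)
  rw [log_mul (by positivity) hx1.ne', log_pow] at hlower
  rw [log_div (by positivity) hx1.ne', abs_sub_le_iff]
  push_cast at hupper ⊢
  constructor <;> linarith

theorem sum_Icc_log_cyclotomic_eval {x : ℝ} (hx : 1 < x) (n : ℕ) :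
    ∑ d ∈ Icc 1 n, log ((cyclotomic d ℝ).eval x) =
      ∑ k ∈ Ioc 0 n, (μ k : ℝ) * ∑ e ∈ Ioc 0 (n / k), log (x ^ e - 1) := by
  let f : ArithmeticFunction ℝ := ⟨fun d => log ((cyclotomic d ℝ).eval x), by simp⟩
  have hf : ∀ e, 0 < e → (f * ζ) e = log (x ^ e - 1) := fun _ he =>
    ArithmeticFunction.coe_mul_zeta_apply.trans (sum_divisors_log_cyclotomic_eval hx he)
  rw [show Icc 1 n = Ioc 0 n from Icc_add_one_left_eq_Ioc 0 n]
  refine (f.sum_Ioc_eq_sum_moebius_mul_sum_Ioc_mul_zeta n).trans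
    (sum_congr rfl fun k _ => congrArg _ (sum_congr rfl fun e he => hf e (mem_Ioc.1 he).1))

theorem tendsto_log_prod_cyclotomic_eval_div_sq {x : ℝ} (hx : 1 < x) :
    Tendsto (fun n : ℕ => log (∏ d ∈ Icc 1 n, (cyclotomic d ℝ).eval x) / n ^ 2) atTop
      (𝓝 (3 / π ^ 2 * log x)) := by
  have ha : ∀ e : ℕ, 0 < e → |log (x ^ e - 1) - log x * e| ≤ log (x / (x - 1)) :=
    fun e he => abs_log_pow_sub_one_sub_le hx he
  have h := tendsto_sum_moebius_mul_div_sq (tendsto_sum_Ioc_div_sq ha) (abs_sum_Ioc_le ha)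
  rw [show 6 / π ^ 2 * (log x / 2) = 3 / π ^ 2 * log x by ring] at h
  simpa only [log_prod fun d _ => (cyclotomic_pos' d hx).ne', sum_Icc_log_cyclotomic_eval hx]
    using h

theorem tendsto_prod_cyclotomic_eval_rpow {x : ℝ} (hx : 1 < x) :
    Tendsto (fun n : ℕ => (∏ d ∈ Icc 1 n, (cyclotomic d ℝ).eval x) ^ ((1 : ℝ) / n ^ 2)) atTop
      (𝓝 (x ^ (3 / π ^ 2))) := by
  simp_rw [rpow_def_of_pos (zero_lt_one.trans hx),
    rpow_def_of_pos (prod_pos fun d _ => cyclotomic_pos' d hx), mul_one_div]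
  exact (continuous_exp.tendsto _).comp
    (by simpa only [mul_comm] using tendsto_log_prod_cyclotomic_eval_div_sq hx)

theorem cyclotomic_product_asymptotics (p : ℤ) (hp : 2 ≤ p) :
    Tendsto
      (fun n : ℕ =>
        ((∏ d ∈ Finset.Icc 1 n, (Polynomial.cyclotomic d ℤ).eval p : ℤ) : ℝ) ^
          ((1 : ℝ) / (n : ℝ) ^ 2))
      atTop (nhds ((p : ℝ) ^ ((3 : ℝ) / Real.pi ^ 2))) := by
  have hcast : ∀ d, (((cyclotomic d ℤ).eval p : ℤ) : ℝ) = (cyclotomic d ℝ).eval (p : ℝ) :=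
    fun d => (cyclotomic.eval_apply p d (Int.castRingHom ℝ)).symm
  simpa only [Int.cast_prod, hcast]
    using tendsto_prod_cyclotomic_eval_rpow (by exact_mod_cast hp : (1 : ℝ) < p)
end

section
/- As a polynomial identity (equivalently, for every integer p ≥ 2 as integers), lcm{x^j − 1 : 1 ≤ j ≤ n} = ∏_{d=1}^n Φ_d(x), where Φ_d is the d-th cyclotomic polynomial. -/
/-!
Add the indices one at a time, in increasing order. Writing `Φ_d = Φ_d(p)`, we have
`p^m - 1 = Φ_m · ∏_{d ∣ m, d < m} Φ_d`. Since `gcd` distributes over `lcm` and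
`gcd(p^j - 1, p^m - 1) = p^gcd(j, m) - 1`, the gcd of `p^m - 1` with the lcm of all earlier
terms is the lcm of `p^d - 1` over the proper divisors `d` of `m`, which by induction is
`∏_{d ∣ m, d < m} Φ_d`. So adding the index `m` multiplies the lcm by exactly `Φ_m`. The argument
works for any strong divisibility sequence `f` (`gcd (f a) (f b) = f (gcd a b)`) with
`f n = ∏_{d ∣ n} g d`, and any finite set of indices closed under taking divisors.
-/

open Finset Polynomial

namespace Nat

theorem gcd_lcm_distrib (a b c : ℕ) : gcd (lcm a b) c = lcm (gcd a c) (gcd b c) := by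
  rcases eq_or_ne a 0 with rfl | ha
  · simp [lcm_eq_left (gcd_dvd_right b c)]
  rcases eq_or_ne b 0 with rfl | hb
  · simp [lcm_eq_right (gcd_dvd_right a c)]
  rcases eq_or_ne c 0 with rfl | hc
  · simp
  have hac : gcd a c ≠ 0 := gcd_ne_zero_right hc
  have hbc : gcd b c ≠ 0 := gcd_ne_zero_right hc
  refine eq_of_factorization_eq (gcd_ne_zero_right hc) (lcm_ne_zero hac hbc) fun q => ?_
  simp only [factorization_gcd (lcm_ne_zero ha hb) hc, factorization_lcm ha hb,
    factorization_lcm hac hbc, factorization_gcd ha hc, factorization_gcd hb hc,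
    Finsupp.inf_apply, Finsupp.sup_apply, min_max_distrib_right]

theorem gcd_finset_lcm_distrib {ι : Type*} (s : Finset ι) (f : ι → ℕ) (c : ℕ) :
    gcd (s.lcm f) c = s.lcm fun i => gcd (f i) c := by
  classical
  induction s using Finset.induction with
  | empty => simp
  | insert _ _ _ ih => rw [lcm_insert, lcm_insert, ← ih]; exact gcd_lcm_distrib _ _ _

theorem lcm_mul_left_of_gcd_eq {a b k : ℕ} (h : gcd b (k * a) = a) (ha : a ≠ 0) :
    lcm (k * a) b = k * b := by
  rw [lcm_eq_mul_div, gcd_comm, h, mul_right_comm, Nat.mul_div_cancel _ (pos_of_ne_zero ha)]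

theorem pow_sub_one_eq_prod_natAbs_eval_cyclotomic {q n : ℕ} (hq : 1 ≤ q) (hn : 0 < n) :
    q ^ n - 1 = ∏ d ∈ n.divisors, ((cyclotomic d ℤ).eval (q : ℤ)).natAbs := by
  have h := congrArg (fun P => Int.natAbsHom (eval (q : ℤ) P))
    (prod_cyclotomic_eq_X_pow_sub_one hn ℤ)
  simp only [eval_prod, map_prod, Int.natAbsHom_apply] at h
  rw [h, eval_sub, eval_pow, eval_X, eval_one, ← Nat.cast_pow]
  have := one_le_pow n q hq
  omega

end Nat

theorem Int.natCast_finset_lcm {ι : Type*} (s : Finset ι) (f : ι → ℕ) :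
    ((s.lcm f : ℕ) : ℤ) = s.lcm fun i => (f i : ℤ) := by
  classical
  induction s using Finset.induction with
  | empty => simp
  | insert _ _ _ ih =>
    rw [lcm_insert, lcm_insert, ← ih, ← Int.coe_lcm, Int.lcm_natCast_natCast]; rfl

def DivisorClosed (S : Finset ℕ) : Prop :=
  ∀ j ∈ S, ∀ d, d ∣ j → d ∈ S

theorem divisorClosed_Icc_one (n : ℕ) : DivisorClosed (Icc 1 n) := by
  intro j hj d hdj
  simp only [mem_Icc] at hj ⊢
  exact ⟨Nat.pos_of_dvd_of_pos hdj hj.1, (Nat.le_of_dvd hj.1 hdj).trans hj.2⟩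

theorem divisorClosed_properDivisors (m : ℕ) : DivisorClosed m.properDivisors := by
  intro j hj d hdj
  obtain ⟨hjm, hjlt⟩ := Nat.mem_properDivisors.1 hj
  exact Nat.mem_properDivisors.2 ⟨hdj.trans hjm,
    (Nat.le_of_dvd (Nat.pos_of_dvd_of_pos hjm (by omega)) hdj).trans_lt hjlt⟩

theorem DivisorClosed.erase {S : Finset ℕ} (hS : DivisorClosed S) {m : ℕ}
    (hm : ∀ j ∈ S.erase m, ¬ m ∣ j) : DivisorClosed (S.erase m) := fun j hj d hdj =>
  mem_erase.2 ⟨fun hdm => hm j hj (hdm ▸ hdj), hS j (mem_of_mem_erase hj) d hdj⟩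

theorem DivisorClosed.properDivisors_subset_erase {S : Finset ℕ} (hS : DivisorClosed S)
    {m : ℕ} (hm : m ∈ S) : m.properDivisors ⊆ S.erase m := fun d hd =>
  mem_erase.2 ⟨(Nat.mem_properDivisors.1 hd).2.ne, hS m hm d (Nat.mem_properDivisors.1 hd).1⟩

theorem not_max'_dvd_of_mem_erase {S : Finset ℕ} (h0 : 0 ∉ S) (hS : S.Nonempty) :
    ∀ j ∈ S.erase (S.max' hS), ¬ S.max' hS ∣ j := by
  intro j hj hdvd
  obtain ⟨hjm, hjS⟩ := mem_erase.1 hj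
  exact hjm (Nat.le_antisymm (S.le_max' j hjS)
    (Nat.le_of_dvd (Nat.pos_of_ne_zero (ne_of_mem_of_not_mem hjS h0)) hdvd))

section StrongDivisibility

variable {f g : ℕ → ℕ}

theorem gcd_finset_lcm_eq_lcm_properDivisors (hgcd : ∀ a b, Nat.gcd (f a) (f b) = f (Nat.gcd a b))
    {T : Finset ℕ} {m : ℕ} (hm : m ≠ 0) (hT : m.properDivisors ⊆ T) (hndvd : ∀ j ∈ T, ¬ m ∣ j) :
    Nat.gcd (T.lcm f) (f m) = m.properDivisors.lcm f := by
  have himage : T.image (Nat.gcd · m) = m.properDivisors := by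
    ext d
    simp only [mem_image, Nat.mem_properDivisors]
    constructor
    · rintro ⟨j, hj, rfl⟩
      refine ⟨Nat.gcd_dvd_right j m, (Nat.le_of_dvd (Nat.pos_of_ne_zero hm)
        (Nat.gcd_dvd_right j m)).lt_of_ne fun h => hndvd j hj ?_⟩
      exact h ▸ Nat.gcd_dvd_left j m
    · intro hd
      exact ⟨d, hT (Nat.mem_properDivisors.2 hd), Nat.gcd_eq_left hd.1⟩
  rw [Nat.gcd_finset_lcm_distrib, ← himage, lcm_image]
  simp only [hgcd, Function.comp_def]

theorem finset_lcm_eq_prod_of_divisorClosed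
    (hprod : ∀ n, 0 < n → f n = ∏ d ∈ n.divisors, g d)
    (hgcd : ∀ a b, Nat.gcd (f a) (f b) = f (Nat.gcd a b))
    (hne : ∀ n, 0 < n → f n ≠ 0) (S : Finset ℕ) (h0 : 0 ∉ S) (hS : DivisorClosed S) :
    S.lcm f = ∏ d ∈ S, g d := by
  induction S using Finset.strongInduction with
  | _ S ih =>
  rcases S.eq_empty_or_nonempty with rfl | hSne
  · simp
  set m := S.max' hSne
  have hmS : m ∈ S := S.max'_mem hSne
  have hm : 0 < m := Nat.pos_of_ne_zero (ne_of_mem_of_not_mem hmS h0)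
  have hndvd := not_max'_dvd_of_mem_erase h0 hSne
  have hpd := hS.properDivisors_subset_erase hmS
  have ih_erase : (S.erase m).lcm f = ∏ d ∈ S.erase m, g d :=
    ih _ (erase_ssubset hmS) (fun h => h0 (mem_of_mem_erase h)) (hS.erase hndvd)
  have ih_pd : m.properDivisors.lcm f = ∏ d ∈ m.properDivisors, g d :=
    ih _ (hpd.trans_ssubset (erase_ssubset hmS)) (by simp [Nat.mem_properDivisors, hm.ne'])
      (divisorClosed_properDivisors m)
  have hfm : f m = g m * ∏ d ∈ m.properDivisors, g d := by
    rw [hprod m hm, ← Nat.insert_self_properDivisors hm.ne',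
      prod_insert Nat.self_notMem_properDivisors]
  have hgcd_m : Nat.gcd ((S.erase m).lcm f) (g m * ∏ d ∈ m.properDivisors, g d)
      = ∏ d ∈ m.properDivisors, g d := by
    rw [← hfm, gcd_finset_lcm_eq_lcm_properDivisors hgcd hm.ne' hpd hndvd, ih_pd]
  rw [← insert_erase hmS, lcm_insert, prod_insert (notMem_erase m S), hfm, ← ih_erase]
  exact Nat.lcm_mul_left_of_gcd_eq hgcd_m (right_ne_zero_of_mul (hfm ▸ hne m hm))

end StrongDivisibility

theorem lcm_eq_cyclotomic_product (p : ℤ) (hp : 2 ≤ p) (n : ℕ) :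
    (Finset.Icc 1 n).lcm (fun j => p ^ j - 1) =
      ∏ d ∈ Finset.Icc 1 n, (Polynomial.cyclotomic d ℤ).eval p := by
  lift p to ℕ using by omega
  have hcast : ∀ j, ((p ^ j - 1 : ℕ) : ℤ) = (p : ℤ) ^ j - 1 := fun j => by
    rw [Nat.cast_sub (Nat.one_le_pow _ _ (by omega))]; push_cast; rfl
  have hcyc : ∀ d, (((cyclotomic d ℤ).eval (p : ℤ)).natAbs : ℤ) = (cyclotomic d ℤ).eval (p : ℤ) :=
    fun d => Int.natAbs_of_nonneg (cyclotomic_pos' d (by omega)).le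
  have key := finset_lcm_eq_prod_of_divisorClosed (f := fun j => p ^ j - 1)
    (g := fun d => ((cyclotomic d ℤ).eval (p : ℤ)).natAbs)
    (fun k hk => Nat.pow_sub_one_eq_prod_natAbs_eval_cyclotomic (by omega) hk)
    (Nat.pow_sub_one_gcd_pow_sub_one p)
    (fun k hk => by have := Nat.one_lt_pow hk.ne' (show 1 < p by omega); omega)
    (Icc 1 n) (by simp) (divisorClosed_Icc_one n)
  simpa [hcast, hcyc, Int.natCast_finset_lcm] using congrArg (Nat.cast (R := ℤ)) key
end

section
/- For 0 < q ≤ 1/2, natural number n ≥ 1, and x ∈ [0,1], the function x ↦ (qx;q)_n · x^n attains its maximum on [0,1] at x = 1; equivalently, (qx;q)_n x^n ≤ (q;q)_n for all x ∈ [0,1]. -/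
/-! Each factor of `(qx;q)_n x^n = ∏_{m=1}^n x (1 - q^m x)` is at most the corresponding factor
`1 - q^m` of `(q;q)_n`: the difference factors as `(1 - x) (1 - q^m (1 + x))`, and
`q^m (1 + x) ≤ 2q ≤ 1`. -/

lemma mul_one_sub_mul_nonneg {a x : ℝ} (ha : a ≤ 1) (hx0 : 0 ≤ x) (hx1 : x ≤ 1) :
    0 ≤ x * (1 - x * a) := by
  have : x * a ≤ 1 := by
    rcases le_total a 0 with h | h <;> nlinarith
  exact mul_nonneg hx0 (by linarith)

lemma mul_one_sub_mul_le_one_sub {a x : ℝ} (ha : a ≤ 1 / 2) (hx0 : 0 ≤ x) (hx1 : x ≤ 1) :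
    x * (1 - x * a) ≤ 1 - a := by
  have hfactor : 1 - a - x * (1 - x * a) = (1 - x) * (1 - a * (1 + x)) := by ring
  have hsecond : 0 ≤ 1 - a * (1 + x) := by
    rcases le_total a 0 with h | h <;> nlinarith
  nlinarith [mul_nonneg (sub_nonneg.2 hx1) hsecond]

lemma prod_one_sub_mul_mul_pow_card_le {ι : Type*} (s : Finset ι) (a : ι → ℝ)
    (ha : ∀ i ∈ s, a i ≤ 1 / 2) {x : ℝ} (hx0 : 0 ≤ x) (hx1 : x ≤ 1) :
    (∏ i ∈ s, (1 - x * a i)) * x ^ s.card ≤ ∏ i ∈ s, (1 - a i) := by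
  calc (∏ i ∈ s, (1 - x * a i)) * x ^ s.card = ∏ i ∈ s, x * (1 - x * a i) := by
        rw [Finset.prod_mul_distrib, Finset.prod_const, mul_comm]
    _ ≤ ∏ i ∈ s, (1 - a i) :=
        Finset.prod_le_prod
          (fun i hi => mul_one_sub_mul_nonneg ((ha i hi).trans (by norm_num)) hx0 hx1)
          (fun i hi => mul_one_sub_mul_le_one_sub (ha i hi) hx0 hx1)

theorem qpoch_max_at_one_general (q : ℝ) (hq : 0 < q) (hq2 : q ≤ 1 / 2) (n : ℕ)
    (x : ℝ) (hx : x ∈ Set.Icc (0 : ℝ) 1) :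
    (∏ j ∈ Finset.range n, (1 - x * q ^ (j + 1))) * x ^ n ≤
      ∏ j ∈ Finset.range n, (1 - q ^ (j + 1)) := by
  have hpow : ∀ j ∈ Finset.range n, q ^ (j + 1) ≤ 1 / 2 := fun j _ =>
    (pow_le_of_le_one hq.le (hq2.trans (by norm_num)) j.succ_ne_zero).trans hq2
  simpa using prod_one_sub_mul_mul_pow_card_le (Finset.range n) _ hpow hx.1 hx.2

theorem qpoch_max_at_one (q : ℝ) (hq : 0 < q) (hq2 : q ≤ 1 / 2) (n : ℕ) (hn : 1 ≤ n)
    (x : ℝ) (hx : x ∈ Set.Icc (0 : ℝ) 1) :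
    (∏ j ∈ Finset.range n, (1 - x * q ^ (j + 1))) * x ^ n ≤
      ∏ j ∈ Finset.range n, (1 - q ^ (j + 1)) :=
  qpoch_max_at_one_general q hq hq2 n x hx
end

section
/- For 0 < q < 1, p = 1/q, natural number n and integer ℓ ≥ 0, the n-th q-derivative of the function x ↦ 1/(p^n − q^{ℓ+1} x) is given by D_q^n (1/(p^n − q^{ℓ+1} x)) = q^{ℓn} (q;q)_n p^{n(n-1)/2} / ((1−q)^n ∏_{j=0}^n (p^{n+j} − x q^{ℓ+1})). -/
/-!
With `u = a - b x` and `v = a - b q^{k+1} x` one has `1/u - 1/v = b x (1 - q^{k+1}) / (u v)`, so one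
`q`-derivative sends `c / ∏_{j ≤ k} (a - b q^j x)` to
`c b (1 - q^{k+1}) / ((1 - q) ∏_{j ≤ k+1} (a - b q^j x))`. Iterating from `1 / (a - b x)` gives
`D_q^k`, and the theorem is the case `a = p^n`, `b = q^{ℓ+1}`, after pulling `p^j` out of the
`j`-th factor of the product.
-/

/-- The q-derivative operator: `D_q f(x) = (f(x) - f(qx))/(x(1-q))` for `x ≠ 0`,
extended by `f'(0)` at `0`. -/
noncomputable def qDerivOp (q : ℝ) (f : ℝ → ℝ) : ℝ → ℝ :=
  fun x => if x = 0 then deriv f 0 else (f x - f (q * x)) / (x * (1 - q))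

open Finset

lemma qDerivOp_of_ne_zero (q : ℝ) (f : ℝ → ℝ) {x : ℝ} (hx : x ≠ 0) :
    qDerivOp q f x = (f x - f (q * x)) / (x * (1 - q)) :=
  if_neg hx

lemma div_sub_div_of_mul_eq_mul {K : Type*} [Field K] {c A B u v : K} (hAv : A * v ≠ 0) (h : A * v = B * u) :
    c / A - c / B = c * (v - u) / (A * v) := by
  have hv : v ≠ 0 := right_ne_zero_of_mul hAv
  have hu : u ≠ 0 := right_ne_zero_of_mul (h ▸ hAv)
  calc c / A - c / B = c * v / (A * v) - c * u / (B * u) := by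
        rw [mul_div_mul_right _ _ hv, mul_div_mul_right _ _ hu]
    _ = c * (v - u) / (A * v) := by rw [← h, ← sub_div, mul_sub]

theorem qDerivOp_iterate_one_div_sub_mul {q : ℝ} (hq0 : q ≠ 0) (hq1 : q ≠ 1) (a b : ℝ)
    (k : ℕ) {x : ℝ} (hx : x ≠ 0) (h : ∀ j ≤ k, a - b * (q ^ j * x) ≠ 0) :
    (qDerivOp q)^[k] (fun y => 1 / (a - b * y)) x =
      b ^ k * (∏ i ∈ Icc 1 k, (1 - q ^ i)) / (1 - q) ^ k /
        ∏ j ∈ range (k + 1), (a - b * (q ^ j * x)) := by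
  induction k generalizing x with
  | zero => simp
  | succ k ih =>
    have hqx : q * x ≠ 0 := mul_ne_zero hq0 hx
    have hP : ∏ j ∈ range (k + 2), (a - b * (q ^ j * x)) ≠ 0 :=
      prod_ne_zero_iff.2 fun j hj => h j (Nat.lt_succ_iff.1 (mem_range.1 hj))
    have hlast := prod_range_succ (fun j => a - b * (q ^ j * x)) (k + 1)
    have hfirst : ∏ j ∈ range (k + 2), (a - b * (q ^ j * x)) =
        (∏ j ∈ range (k + 1), (a - b * (q ^ j * (q * x)))) * (a - b * x) := by
      rw [prod_range_succ']
      simp only [pow_succ, pow_zero, one_mul, mul_assoc]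
    rw [Function.iterate_succ_apply', qDerivOp_of_ne_zero q _ hx,
      ih hx fun j hj => h j (by omega),
      ih hqx fun j hj => by simpa [pow_succ, mul_assoc] using h (j + 1) (by omega),
      div_sub_div_of_mul_eq_mul (hlast ▸ hP) (hlast.symm.trans hfirst), ← hlast,
      prod_Icc_succ_top (by omega)]
    have h1q : (1 : ℝ) - q ≠ 0 := sub_ne_zero.2 hq1.symm
    field_simp
    ring

lemma prod_range_succ_inv_pow_add_sub {K : Type*} [Field K] (q c x : K) (hq0 : q ≠ 0) (n : ℕ) :
    ∏ j ∈ range (n + 1), ((1 / q) ^ (n + j) - x * c) =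
      (1 / q) ^ (n * (n - 1) / 2 + n) * ∏ j ∈ range (n + 1), ((1 / q) ^ n - c * (q ^ j * x)) := by
  have hterm (j : ℕ) :
      (1 / q) ^ (n + j) - x * c = (1 / q) ^ j * ((1 / q) ^ n - c * (q ^ j * x)) := by
    have hj : (1 / q) ^ j * q ^ j = 1 := by rw [← mul_pow, one_div_mul_cancel hq0, one_pow]
    linear_combination (x * c) * hj
  rw [prod_congr rfl fun j _ => hterm j, prod_mul_distrib, prod_pow_eq_pow_sum, sum_range_succ,
    sum_range_id]

theorem qDeriv_iterate (q : ℝ) (hq : 0 < q) (hq1 : q < 1) (n ℓ : ℕ) (x : ℝ) (hx : x ≠ 0)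
    (h : ∀ j ≤ n, (1 / q) ^ n - q ^ (ℓ + 1) * (q ^ j * x) ≠ 0) :
    (qDerivOp q)^[n] (fun y => 1 / ((1 / q) ^ n - q ^ (ℓ + 1) * y)) x =
      q ^ (ℓ * n) * (∏ i ∈ Finset.Icc 1 n, (1 - q ^ i)) * (1 / q) ^ (n * (n - 1) / 2) /
        ((1 - q) ^ n * ∏ j ∈ Finset.range (n + 1), ((1 / q) ^ (n + j) - x * q ^ (ℓ + 1))) := by
  have hq0 : q ≠ 0 := hq.ne'
  have hP : ∏ j ∈ range (n + 1), ((1 / q) ^ n - q ^ (ℓ + 1) * (q ^ j * x)) ≠ 0 :=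
    prod_ne_zero_iff.2 fun j hj => h j (Nat.lt_succ_iff.1 (mem_range.1 hj))
  rw [qDerivOp_iterate_one_div_sub_mul hq0 hq1.ne _ _ n hx h,
    prod_range_succ_inv_pow_add_sub q _ x hq0 n]
  generalize ∏ j ∈ range (n + 1), ((1 / q) ^ n - q ^ (ℓ + 1) * (q ^ j * x)) = P at hP ⊢
  have h1q : (1 : ℝ) - q ≠ 0 := sub_ne_zero.2 hq1.ne'
  rw [← pow_mul, add_one_mul, pow_add q (ℓ * n) n, pow_add (1 / q) _ n, one_div_pow q n]
  field_simp
end
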